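/- Let u : ℝ → ℝ be three times continuously differentiable (ContDiff ℝ 3) and b ∈ ℝ. Then there exist constants C ≥ 0 and h₀ > 0 such that for all 0 < h ≤ h₀, | (5u(b+h) − 4u(b+2h) + u(b+3h) − 2u(b))/(4h²) + (1/4)·u''(b+h) | ≤ C h. In particular this boundary-modified numerical moment is O(1) as h → 0⁺, so the auxiliary boundary condition δ²u = 0 yields a local truncation error of order h^p at grid nodes adjacent to the boundary when the moment is scaled by γ h^p. -/

import Mathlib

/-! Expand `u` to second order about the first interior node `x = b + h`. At the stencil
points `x + h`, `x + 2h`, `x - h` with weights `-4`, `1`, `-2` (and `5` at `x`) the constant and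
first-order terms cancel and the second-order terms add up to `-h² u''(x)`, which the
`(1/4) u''(x)` term cancels after division by `4h²`. What is left is a combination of three
Lagrange remainders, each `O(h³)` by a bound on `u'''` over `[b, b + 3]`. -/

open Set Finset Nat

theorem ContDiff.exists_taylor_lagrange {f : ℝ → ℝ} {n : ℕ} (hf : ContDiff ℝ (n + 1) f)
    (x₀ x : ℝ) :
    ∃ ξ ∈ uIcc x₀ x, f x = ∑ k ∈ range (n + 1), iteratedDeriv k f x₀ * (x - x₀) ^ k / k !
      + iteratedDeriv (n + 1) f ξ * (x - x₀) ^ (n + 1) / (n + 1)! := by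
  rcases eq_or_ne x₀ x with rfl | hx
  · refine ⟨x₀, left_mem_uIcc, ?_⟩
    rw [sum_range_succ']
    simp
  obtain ⟨ξ, hξ, h⟩ := taylor_mean_remainder_lagrange_iteratedDeriv hx hf.contDiffOn
  refine ⟨ξ, Ioo_subset_Icc_self hξ, ?_⟩
  have htaylor : taylorWithinEval f n (uIcc x₀ x) x₀ x
      = ∑ k ∈ range (n + 1), iteratedDeriv k f x₀ * (x - x₀) ^ k / k ! := by
    rw [taylor_within_apply]
    refine sum_congr rfl fun k hk => ?_
    rw [iteratedDerivWithin_eq_iteratedDeriv (uniqueDiffOn_uIcc hx)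
      (hf.of_le (by exact_mod_cast (mem_range.1 hk).le)).contDiffAt left_mem_uIcc, smul_eq_mul]
    ring
  rw [← h, htaylor, add_sub_cancel]

theorem ContDiff.abs_sub_taylor_le {f : ℝ → ℝ} {n : ℕ} (hf : ContDiff ℝ (n + 1) f) {x₀ x M : ℝ}
    (hM : ∀ ξ ∈ uIcc x₀ x, |iteratedDeriv (n + 1) f ξ| ≤ M) :
    |f x - ∑ k ∈ range (n + 1), iteratedDeriv k f x₀ * (x - x₀) ^ k / k !|
      ≤ M * |x - x₀| ^ (n + 1) / (n + 1)! := by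
  obtain ⟨ξ, hξ, h⟩ := hf.exists_taylor_lagrange x₀ x
  rw [h, add_sub_cancel_left, abs_div, abs_mul, abs_pow, Nat.abs_cast]
  gcongr
  exact hM ξ hξ

noncomputable def taylorRemainderTwo (u : ℝ → ℝ) (x y : ℝ) : ℝ :=
  u y - (u x + (y - x) * deriv u x + (y - x) ^ 2 / 2 * iteratedDeriv 2 u x)

theorem ContDiff.abs_taylorRemainderTwo_le {u : ℝ → ℝ} (hu : ContDiff ℝ 3 u) {x y M : ℝ}
    (hM : ∀ ξ ∈ uIcc x y, |iteratedDeriv 3 u ξ| ≤ M) :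
    |taylorRemainderTwo u x y| ≤ M * |y - x| ^ 3 / 6 := by
  have h := hu.abs_sub_taylor_le (n := 2) hM
  simp only [reduceAdd, sum_range_succ, Finset.range_one, sum_singleton, iteratedDeriv_zero,
    pow_zero, mul_one, factorial, cast_one, div_one, iteratedDeriv_one, pow_one, succ_eq_add_one,
    zero_add, cast_ofNat, reduceMul] at h
  convert h using 2
  rw [taylorRemainderTwo]; ring

theorem boundary_moment_add_eq (u : ℝ → ℝ) {b h : ℝ} (hh : h ≠ 0) :
    (5 * u (b + h) - 4 * u (b + 2 * h) + u (b + 3 * h) - 2 * u b) / (4 * h ^ 2)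
        + (1 / 4) * iteratedDeriv 2 u (b + h)
      = (-4 * taylorRemainderTwo u (b + h) (b + 2 * h) + taylorRemainderTwo u (b + h) (b + 3 * h)
          - 2 * taylorRemainderTwo u (b + h) b) / (4 * h ^ 2) := by
  simp only [taylorRemainderTwo]
  field_simp
  ring

theorem boundary_moment_bc2a_truncation
    (u : ℝ → ℝ) (hu : ContDiff ℝ 3 u) (b : ℝ) :
    ∃ C : ℝ, 0 ≤ C ∧ ∃ h₀ : ℝ, 0 < h₀ ∧ ∀ h : ℝ, 0 < h → h ≤ h₀ →
      |(5 * u (b + h) - 4 * u (b + 2 * h) + u (b + 3 * h) - 2 * u b) / (4 * h ^ 2)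
        + (1 / 4) * iteratedDeriv 2 u (b + h)| ≤ C * h := by
  obtain ⟨M, hM⟩ := (isCompact_Icc (a := b) (b := b + 3)).exists_bound_of_continuousOn
    (hu.continuous_iteratedDeriv 3 le_rfl).continuousOn
  have hM₀ : 0 ≤ M := (norm_nonneg _).trans (hM b (left_mem_Icc.2 (by linarith)))
  refine ⟨7 * M / 12, by positivity, 1, one_pos, fun h hh hh₁ => ?_⟩
  have hR : ∀ y ∈ Icc b (b + 3), |taylorRemainderTwo u (b + h) y| ≤ M * |y - (b + h)| ^ 3 / 6 :=
    fun y hy => hu.abs_taylorRemainderTwo_le fun ξ hξ =>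
      hM ξ (uIcc_subset_Icc ⟨by linarith, by linarith⟩ hy hξ)
  have hR₁ := hR (b + 2 * h) ⟨by linarith, by linarith⟩
  have hR₂ := hR (b + 3 * h) ⟨by linarith, by linarith⟩
  have hR₃ := hR b ⟨le_rfl, by linarith⟩
  rw [show b + 2 * h - (b + h) = h by ring, abs_of_pos hh] at hR₁
  rw [show b + 3 * h - (b + h) = 2 * h by ring,
    abs_of_pos (by positivity : (0 : ℝ) < 2 * h)] at hR₂
  rw [show b - (b + h) = -h by ring, abs_neg, abs_of_pos hh] at hR₃
  rw [boundary_moment_add_eq u hh.ne', abs_div, abs_of_pos (by positivity : (0 : ℝ) < 4 * h ^ 2),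
    div_le_iff₀ (by positivity)]
  rw [abs_le] at hR₁ hR₂ hR₃ ⊢
  constructor <;> linarith
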